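/- For the Hilbert Lagrangian, the divergence of the second momentum is ∂_β P^{μναβ} = (1/2)( 2g^{μν}Γ^α − g^{μα}Γ^ν − g^{να}Γ^μ + Γ^{μνα} + Γ^{νμα} − 2Γ^{αμν} )√(−det g), where P^{μναβ} = (1/2)( g^{μα}g^{νβ} + g^{μβ}g^{να} − 2g^{μν}g^{αβ} )√(−det g), Γ^{λμν} = g^{λα}g^{μβ}g^{νγ}Γ_{αβγ}, and Γ^λ = g^{μν}Γ^λ_{μν}. -/

import Mathlib

/-- Partial derivative of a scalar function on ℝ⁴ in the `i`-th coordinate direction. -/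
noncomputable def pd (i : Fin 4) (f : (Fin 4 → ℝ) → ℝ) (x : Fin 4 → ℝ) : ℝ :=
  fderiv ℝ f x (Pi.single i 1)

section helpers
variable {f h : (Fin 4 → ℝ) → ℝ} {x : Fin 4 → ℝ} {i : Fin 4}

lemma pd_add (hf : DifferentiableAt ℝ f x) (hh : DifferentiableAt ℝ h x) :
    pd i (fun y => f y + h y) x = pd i f x + pd i h x := by
  simp [pd, fderiv_fun_add hf hh]

lemma pd_sub (hf : DifferentiableAt ℝ f x) (hh : DifferentiableAt ℝ h x) :
    pd i (fun y => f y - h y) x = pd i f x - pd i h x := by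
  simp [pd, fderiv_fun_sub hf hh]

lemma pd_mul (hf : DifferentiableAt ℝ f x) (hh : DifferentiableAt ℝ h x) :
    pd i (fun y => f y * h y) x = pd i f x * h x + f x * pd i h x := by
  simp [pd, fderiv_fun_mul hf hh]; ring

lemma pd_cmul (hf : DifferentiableAt ℝ f x) (c : ℝ) :
    pd i (fun y => c * f y) x = c * pd i f x := by
  simp [pd, fderiv_const_mul hf c]

lemma pd_sum {ι : Type*} {s : Finset ι} {F : ι → (Fin 4 → ℝ) → ℝ}
    (h : ∀ j ∈ s, DifferentiableAt ℝ (F j) x) :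
    pd i (fun y => ∑ j ∈ s, F j y) x = ∑ j ∈ s, pd i (F j) x := by
  simp [pd, fderiv_fun_sum h]

lemma pd_prod {ι : Type*} [DecidableEq ι] {s : Finset ι} {F : ι → (Fin 4 → ℝ) → ℝ}
    (h : ∀ j ∈ s, DifferentiableAt ℝ (F j) x) :
    pd i (fun y => ∏ j ∈ s, F j y) x
      = ∑ j ∈ s, (∏ k ∈ s.erase j, F k x) * pd i (F j) x := by
  have := (HasFDerivAt.finset_prod (u := s) (g := F)
    (fun j hj => (h j hj).hasFDerivAt)).fderiv
  simp only [pd]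
  rw [show (fun y => ∏ j ∈ s, F j y) = (∏ j ∈ s, F j ·) from rfl, this]
  simp [ContinuousLinearMap.sum_apply]

end helpers

section
open Matrix
variable {g ginv : (Fin 4 → ℝ) → Matrix (Fin 4) (Fin 4) ℝ}

lemma ginv_eq_inv (hinv : ∀ x, g x * ginv x = 1) (x : Fin 4 → ℝ) :
    ginv x = (g x)⁻¹ := (Matrix.inv_eq_right_inv (hinv x)).symm

lemma ginv_symm (hsym : ∀ x μ ν, g x μ ν = g x ν μ) (hinv : ∀ x, g x * ginv x = 1)
    (x : Fin 4 → ℝ) (a b : Fin 4) : ginv x a b = ginv x b a := by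
  have ht : (g x)ᵀ = g x := by ext i j; exact hsym x j i
  have : (ginv x)ᵀ = ginv x := by
    rw [ginv_eq_inv hinv, Matrix.transpose_nonsing_inv, ht]
  exact congrFun (congrFun this.symm a) b

lemma ginv_entry (hinv : ∀ x, g x * ginv x = 1) (hdet : ∀ x, (g x).det < 0)
    (x : Fin 4 → ℝ) (a b : Fin 4) :
    ginv x a b = ((g x).det)⁻¹ * (g x).adjugate a b := by
  rw [ginv_eq_inv hinv, Matrix.inv_def, Matrix.smul_apply, Ring.inverse_eq_inv', smul_eq_mul]

lemma diffAt_det {M : (Fin 4 → ℝ) → Matrix (Fin 4) (Fin 4) ℝ} {x : Fin 4 → ℝ}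
    (h : ∀ i j, DifferentiableAt ℝ (fun y => M y i j) x) :
    DifferentiableAt ℝ (fun y => (M y).det) x := by
  have : (fun y => (M y).det)
      = fun y => ∑ σ : Equiv.Perm (Fin 4),
          ((Equiv.Perm.sign σ : ℤ) : ℝ) * ∏ i, M y (σ i) i :=
    funext fun y => Matrix.det_apply' (M y)
  rw [this]
  apply DifferentiableAt.fun_sum
  intro σ _
  exact ((HasFDerivAt.finset_prod (fun j (_ : j ∈ Finset.univ) =>
    (h (σ j) j).hasFDerivAt)).differentiableAt).const_mul _

lemma diffAt_g (hsmooth : ∀ μ ν, ContDiff ℝ (⊤ : ℕ∞) fun x => g x μ ν) (x : Fin 4 → ℝ)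
    (s t : Fin 4) : DifferentiableAt ℝ (fun y => g y s t) x :=
  ((hsmooth s t).differentiable (by simp)).differentiableAt

lemma diffAt_gdet (hsmooth : ∀ μ ν, ContDiff ℝ (⊤ : ℕ∞) fun x => g x μ ν) (x : Fin 4 → ℝ) :
    DifferentiableAt ℝ (fun y => (g y).det) x :=
  diffAt_det fun i j => diffAt_g hsmooth x i j

lemma diffAt_ginv (hsmooth : ∀ μ ν, ContDiff ℝ (⊤ : ℕ∞) fun x => g x μ ν)
    (hinv : ∀ x, g x * ginv x = 1) (hdet : ∀ x, (g x).det < 0)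
    (x : Fin 4 → ℝ) (a b : Fin 4) :
    DifferentiableAt ℝ (fun y => ginv y a b) x := by
  have hfun : (fun y => ginv y a b)
      = fun y => ((g y).det)⁻¹ * ((g y).updateRow b (Pi.single a 1)).det := by
    funext y
    rw [ginv_entry hinv hdet, Matrix.adjugate_apply]
  rw [hfun]
  apply DifferentiableAt.mul
  · exact (diffAt_gdet hsmooth x).inv (ne_of_lt (hdet x))
  · apply diffAt_det
    intro i j
    rcases eq_or_ne i b with rfl | hib
    · simpa using differentiableAt_const (Pi.single a (1:ℝ) j)
    · have : (fun y => ((g y).updateRow b (Pi.single a 1)) i j) = fun y => g y i j := by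
        funext y; rw [Matrix.updateRow_apply, if_neg hib]
      rw [this]; exact diffAt_g hsmooth x i j


-- contraction identities
lemma contract_right (hinv : ∀ x, g x * ginv x = 1) (x : Fin 4 → ℝ) (a b : Fin 4) :
    ∑ k, g x a k * ginv x k b = if a = b then 1 else 0 := by
  have := congrFun (congrFun (hinv x) a) b
  rwa [Matrix.mul_apply, Matrix.one_apply] at this

lemma contract_left (hinv' : ∀ x, ginv x * g x = 1) (x : Fin 4 → ℝ) (a b : Fin 4) :
    ∑ k, ginv x a k * g x k b = if a = b then 1 else 0 := by
  have := congrFun (congrFun (hinv' x) a) b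
  rwa [Matrix.mul_apply, Matrix.one_apply] at this

lemma pd_ginv (hsmooth : ∀ μ ν, ContDiff ℝ (⊤ : ℕ∞) fun x => g x μ ν)
    (hsym : ∀ x μ ν, g x μ ν = g x ν μ)
    (hinv : ∀ x, g x * ginv x = 1) (hinv' : ∀ x, ginv x * g x = 1)
    (hdet : ∀ x, (g x).det < 0)
    (x : Fin 4 → ℝ) (b m c : Fin 4) :
    pd b (fun y => ginv y m c) x
      = -∑ s, ∑ t, ginv x m s * ginv x c t * pd b (fun y => g y s t) x := by
  have dg := diffAt_g hsmooth x
  have dgi := diffAt_ginv hsmooth hinv hdet x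
  -- differentiate the constant ∑ k, g y a k * ginv y k c
  have key : ∀ a : Fin 4, ∑ k, (pd b (fun y => g y a k) x * ginv x k c
      + g x a k * pd b (fun y => ginv y k c) x) = 0 := by
    intro a
    have hconst : (fun y => ∑ k, g y a k * ginv y k c) = fun _ => if a = c then (1:ℝ) else 0 :=
      funext fun y => contract_right hinv y a c
    have h0 : pd b (fun y => ∑ k, g y a k * ginv y k c) x = 0 := by
      rw [hconst]; simp [pd]
    rw [pd_sum (fun k _ => ((dg a k).fun_mul (dgi k c)))] at h0
    rw [← h0]
    exact Finset.sum_congr rfl fun k _ => (pd_mul (dg a k) (dgi k c)).symm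
  have key2 : ∀ a : Fin 4, ∑ k, g x a k * pd b (fun y => ginv y k c) x
      = -∑ k, pd b (fun y => g y a k) x * ginv x k c := by
    intro a
    have := key a
    rw [Finset.sum_add_distrib] at this
    linarith
  -- multiply by ginv x m a and sum over a
  have lhs1 : ∑ a, ginv x m a * (∑ k, g x a k * pd b (fun y => ginv y k c) x)
      = pd b (fun y => ginv y m c) x := by
    simp only [Finset.mul_sum]
    rw [Finset.sum_comm]
    have : ∀ k, ∑ a, ginv x m a * (g x a k * pd b (fun y => ginv y k c) x)
        = (if m = k then (1:ℝ) else 0) * pd b (fun y => ginv y k c) x := by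
      intro k
      rw [← contract_left hinv' x m k, Finset.sum_mul]
      exact Finset.sum_congr rfl fun a _ => by ring
    rw [Finset.sum_congr rfl fun k _ => this k]
    simp
  rw [← lhs1]
  rw [Finset.sum_congr rfl fun a (_ : a ∈ Finset.univ) => by rw [key2 a]]
  conv_rhs => rw [← Finset.sum_neg_distrib]
  apply Finset.sum_congr rfl
  intro s _
  rw [mul_neg, Finset.mul_sum, neg_inj]
  apply Finset.sum_congr rfl
  intro t _
  rw [ginv_symm hsym hinv x t c]
  ring


lemma det_updateCol (hinv : ∀ x, g x * ginv x = 1) (hdet : ∀ x, (g x).det < 0)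
    (x : Fin 4 → ℝ) (i : Fin 4) (c : Fin 4 → ℝ) :
    ∑ σ : Equiv.Perm (Fin 4), ((Equiv.Perm.sign σ : ℤ) : ℝ)
        * ((∏ j ∈ Finset.univ.erase i, g x (σ j) j) * c (σ i))
      = ∑ r, (g x).det * (ginv x i r * c r) := by
  have h1 : ∑ σ : Equiv.Perm (Fin 4), ((Equiv.Perm.sign σ : ℤ) : ℝ)
        * ((∏ j ∈ Finset.univ.erase i, g x (σ j) j) * c (σ i))
      = ((g x).updateCol i c).det := by
    rw [Matrix.det_apply']
    apply Finset.sum_congr rfl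
    intro σ _
    congr 1
    rw [← Finset.mul_prod_erase Finset.univ
      (fun j => (g x).updateCol i c (σ j) j) (Finset.mem_univ i)]
    have h2 : ∀ j ∈ Finset.univ.erase i,
        (g x).updateCol i c (σ j) j = g x (σ j) j := fun j hj => by
      rw [Matrix.updateCol_apply, if_neg (Finset.ne_of_mem_erase hj)]
    rw [Finset.prod_congr rfl h2, Matrix.updateCol_apply, if_pos rfl]
    ring
  rw [h1, ← Matrix.cramer_apply, Matrix.cramer_eq_adjugate_mulVec]
  rw [Matrix.mulVec, dotProduct]
  apply Finset.sum_congr rfl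
  intro r _
  have hadj : (g x).det * ginv x i r = (g x).adjugate i r := by
    rw [ginv_entry hinv hdet x i r, mul_inv_cancel_left₀ (ne_of_lt (hdet x))]
  rw [← hadj]; ring

lemma pd_det (hsmooth : ∀ μ ν, ContDiff ℝ (⊤ : ℕ∞) fun x => g x μ ν)
    (hsym : ∀ x μ ν, g x μ ν = g x ν μ)
    (hinv : ∀ x, g x * ginv x = 1) (hdet : ∀ x, (g x).det < 0)
    (x : Fin 4 → ℝ) (b : Fin 4) :
    pd b (fun y => (g y).det) x
      = (g x).det * ∑ s, ∑ t, ginv x s t * pd b (fun y => g y s t) x := by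
  have dg := diffAt_g hsmooth x
  have hfun : (fun y => (g y).det)
      = fun y => ∑ σ : Equiv.Perm (Fin 4),
          ((Equiv.Perm.sign σ : ℤ) : ℝ) * ∏ i, g y (σ i) i :=
    funext fun y => Matrix.det_apply' (g y)
  rw [hfun, pd_sum (fun σ _ => by
    exact ((HasFDerivAt.finset_prod (fun j (_ : j ∈ Finset.univ) =>
      (dg (σ j) j).hasFDerivAt)).differentiableAt).const_mul _)]
  have step : ∀ σ : Equiv.Perm (Fin 4),
      pd b (fun y => ((Equiv.Perm.sign σ : ℤ) : ℝ) * ∏ i, g y (σ i) i) x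
        = ((Equiv.Perm.sign σ : ℤ) : ℝ) * ∑ i, (∏ j ∈ Finset.univ.erase i, g x (σ j) j)
            * pd b (fun y => g y (σ i) i) x := by
    intro σ
    rw [pd_cmul (by
      exact ((HasFDerivAt.finset_prod (fun j (_ : j ∈ Finset.univ) =>
        (dg (σ j) j).hasFDerivAt)).differentiableAt))]
    rw [pd_prod (fun j _ => dg (σ j) j)]
  rw [Finset.sum_congr rfl fun σ _ => step σ]
  -- swap sums
  rw [Finset.sum_congr rfl fun σ (_ : σ ∈ Finset.univ) => Finset.mul_sum _ _ _]
  rw [Finset.sum_comm]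
  have colstep : ∀ i : Fin 4,
      ∑ σ : Equiv.Perm (Fin 4), ((Equiv.Perm.sign σ : ℤ) : ℝ)
          * ((∏ j ∈ Finset.univ.erase i, g x (σ j) j) * pd b (fun y => g y (σ i) i) x)
        = ∑ r, (g x).det * (ginv x i r * pd b (fun y => g y r i) x) :=
    fun i => det_updateCol hinv hdet x i (fun r => pd b (fun y => g y r i) x)
  rw [Finset.sum_congr rfl fun i _ => colstep i]
  rw [Finset.mul_sum]
  apply Finset.sum_congr rfl
  intro i _
  rw [Finset.mul_sum]
  apply Finset.sum_congr rfl
  intro r _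
  have : (fun y => g y r i) = fun y => g y i r := funext fun y => hsym y r i
  rw [this]

lemma pd_sqrtdet (hsmooth : ∀ μ ν, ContDiff ℝ (⊤ : ℕ∞) fun x => g x μ ν)
    (hsym : ∀ x μ ν, g x μ ν = g x ν μ)
    (hinv : ∀ x, g x * ginv x = 1) (hdet : ∀ x, (g x).det < 0)
    (x : Fin 4 → ℝ) (b : Fin 4) :
    pd b (fun y => Real.sqrt (-(g y).det)) x
      = (1/2) * (∑ s, ∑ t, ginv x s t * pd b (fun y => g y s t) x)
          * Real.sqrt (-(g x).det) := by
  have hu : DifferentiableAt ℝ (fun y => -(g y).det) x := (diffAt_gdet hsmooth x).neg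
  have hpos : (0:ℝ) < -(g x).det := by linarith [hdet x]
  have hs := Real.hasDerivAt_sqrt (ne_of_gt hpos)
  have hcomp : pd b (fun y => Real.sqrt (-(g y).det)) x
      = (1 / (2 * Real.sqrt (-(g x).det))) * pd b (fun y => -(g y).det) x := by
    have hf := (hs.comp_hasFDerivAt x hu.hasFDerivAt).fderiv
    rw [pd, show (fun y => Real.sqrt (-(g y).det))
      = ((fun u => Real.sqrt u) ∘ fun y => -(g y).det) from rfl, hf]
    simp [pd, smul_eq_mul]
  rw [hcomp]
  have hneg : pd b (fun y => -(g y).det) x = -pd b (fun y => (g y).det) x := by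
    rw [pd, pd, fderiv_fun_neg]; simp
  rw [hneg, pd_det hsmooth hsym hinv hdet x b]
  have hsq : Real.sqrt (-(g x).det) * Real.sqrt (-(g x).det) = -(g x).det :=
    Real.mul_self_sqrt (le_of_lt hpos)
  have hsqpos : 0 < Real.sqrt (-(g x).det) := Real.sqrt_pos.mpr hpos
  field_simp [ne_of_gt hsqpos]
  linear_combination (-1 * (∑ s, ∑ t, ginv x s t * pd b (fun y => g y s t) x)) * hsq

end

/-- For the Hilbert Lagrangian, the divergence of the second Ostrogradski momentum
`P^{μναβ} = (1/2)(g^{μα} g^{νβ} + g^{μβ} g^{να} − 2 g^{μν} g^{αβ}) √(−det g)` is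
`∂_β P^{μναβ} = (1/2)(2 g^{μν} Γ^α − g^{μα} Γ^ν − g^{να} Γ^μ + Γ^{μνα} + Γ^{νμα}
 − 2 Γ^{αμν}) √(−det g)`. -/
theorem hilbert_second_momentum_divergence
    (g ginv : (Fin 4 → ℝ) → Matrix (Fin 4) (Fin 4) ℝ)
    (Γ₁ Γup : (Fin 4 → ℝ) → Fin 4 → Fin 4 → Fin 4 → ℝ)
    (Γvec : (Fin 4 → ℝ) → Fin 4 → ℝ)
    (P4 : (Fin 4 → ℝ) → Fin 4 → Fin 4 → Fin 4 → Fin 4 → ℝ)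
    (hsmooth : ∀ μ ν, ContDiff ℝ (⊤ : ℕ∞) fun x => g x μ ν)
    (hsym : ∀ x μ ν, g x μ ν = g x ν μ)
    (hinv : ∀ x, g x * ginv x = 1)
    (hinv' : ∀ x, ginv x * g x = 1)
    (hdet : ∀ x, (g x).det < 0)
    -- `Γ_{λμν} = (1/2)(g_{μλ,ν} + g_{νλ,μ} − g_{μν,λ})`
    (hΓ₁ : ∀ x lam μ ν, Γ₁ x lam μ ν =
      (1 / 2) * (pd ν (fun y => g y μ lam) x + pd μ (fun y => g y ν lam) x
        - pd lam (fun y => g y μ ν) x))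
    -- `Γ^{λμν} = g^{λα} g^{μβ} g^{νγ} Γ_{αβγ}`
    (hΓup : ∀ x lam μ ν, Γup x lam μ ν =
      ∑ α, ∑ β, ∑ γ, ginv x lam α * ginv x μ β * ginv x ν γ * Γ₁ x α β γ)
    -- `Γ^λ = g^{μν} Γ^λ_{μν} = g^{μν} g^{λρ} Γ_{ρμν}`
    (hΓvec : ∀ x lam, Γvec x lam =
      ∑ μ, ∑ ν, ∑ ρ, ginv x μ ν * ginv x lam ρ * Γ₁ x ρ μ ν)
    (hP4 : ∀ x μ ν α β, P4 x μ ν α β =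
      (1 / 2) * (ginv x μ α * ginv x ν β + ginv x μ β * ginv x ν α
        - 2 * ginv x μ ν * ginv x α β) * Real.sqrt (-(g x).det))
    (x : Fin 4 → ℝ) (μ ν α : Fin 4) :
    ∑ β, pd β (fun t => P4 t μ ν α β) x
      = (1 / 2) * (2 * ginv x μ ν * Γvec x α - ginv x μ α * Γvec x ν
          - ginv x ν α * Γvec x μ + Γup x μ ν α + Γup x ν μ α - 2 * Γup x α μ ν)
          * Real.sqrt (-(g x).det) := by
  have dgi := diffAt_ginv hsmooth hinv hdet x
  have dS : DifferentiableAt ℝ (fun y => Real.sqrt (-(g y).det)) x := by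
    have hpos : (0:ℝ) < -(g x).det := by linarith [hdet x]
    exact ((Real.hasDerivAt_sqrt (ne_of_gt hpos)).comp_hasFDerivAt x
      ((diffAt_gdet hsmooth x).neg.hasFDerivAt)).differentiableAt
  have hPfun : ∀ b : Fin 4, (fun t => P4 t μ ν α b)
      = fun t => (1/2) * ((ginv t μ α * ginv t ν b + ginv t μ b * ginv t ν α
          - 2 * (ginv t μ ν * ginv t α b)) * Real.sqrt (-(g t).det)) :=
    fun b => funext fun t => by rw [hP4]; ring
  have dB : ∀ b : Fin 4, DifferentiableAt ℝ (fun t => ginv t μ α * ginv t ν b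
      + ginv t μ b * ginv t ν α - 2 * (ginv t μ ν * ginv t α b)) x :=
    fun b => (((dgi μ α).mul (dgi ν b)).add ((dgi μ b).mul (dgi ν α))).sub
      (((dgi μ ν).mul (dgi α b)).const_mul 2)
  have hstep : ∀ b : Fin 4, pd b (fun t => P4 t μ ν α b) x
      = (1/2) * ((pd b (fun y => ginv y μ α) x * ginv x ν b
            + ginv x μ α * pd b (fun y => ginv y ν b) x
          + (pd b (fun y => ginv y μ b) x * ginv x ν α
            + ginv x μ b * pd b (fun y => ginv y ν α) x)
          - 2 * (pd b (fun y => ginv y μ ν) x * ginv x α b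
            + ginv x μ ν * pd b (fun y => ginv y α b) x)) * Real.sqrt (-(g x).det)
        + (ginv x μ α * ginv x ν b + ginv x μ b * ginv x ν α
            - 2 * (ginv x μ ν * ginv x α b))
          * pd b (fun y => Real.sqrt (-(g y).det)) x) := by
    intro b
    rw [hPfun b, pd_cmul ((dB b).fun_mul dS), pd_mul (dB b) dS,
      pd_sub (((dgi μ α).fun_mul (dgi ν b)).fun_add ((dgi μ b).fun_mul (dgi ν α)))
        (((dgi μ ν).fun_mul (dgi α b)).const_mul 2),
      pd_add ((dgi μ α).fun_mul (dgi ν b)) ((dgi μ b).fun_mul (dgi ν α)),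
      pd_mul (dgi μ α) (dgi ν b), pd_mul (dgi μ b) (dgi ν α),
      pd_cmul ((dgi μ ν).fun_mul (dgi α b)) 2, pd_mul (dgi μ ν) (dgi α b)]
  rw [Finset.sum_congr rfl fun b (_ : b ∈ Finset.univ) => hstep b]
  simp only [pd_ginv hsmooth hsym hinv hinv' hdet x,
    pd_sqrtdet hsmooth hsym hinv hdet x, hΓup, hΓvec, hΓ₁]
  have hG10 : ginv x 1 0 = ginv x 0 1 := ginv_symm hsym hinv x 1 0
  have hG20 : ginv x 2 0 = ginv x 0 2 := ginv_symm hsym hinv x 2 0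
  have hG30 : ginv x 3 0 = ginv x 0 3 := ginv_symm hsym hinv x 3 0
  have hG21 : ginv x 2 1 = ginv x 1 2 := ginv_symm hsym hinv x 2 1
  have hG31 : ginv x 3 1 = ginv x 1 3 := ginv_symm hsym hinv x 3 1
  have hG32 : ginv x 3 2 = ginv x 2 3 := ginv_symm hsym hinv x 3 2
  have hD10 : (fun y => g y 1 0) = (fun y => g y 0 1) := funext fun y => hsym y 1 0
  have hD20 : (fun y => g y 2 0) = (fun y => g y 0 2) := funext fun y => hsym y 2 0
  have hD30 : (fun y => g y 3 0) = (fun y => g y 0 3) := funext fun y => hsym y 3 0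
  have hD21 : (fun y => g y 2 1) = (fun y => g y 1 2) := funext fun y => hsym y 2 1
  have hD31 : (fun y => g y 3 1) = (fun y => g y 1 3) := funext fun y => hsym y 3 1
  have hD32 : (fun y => g y 3 2) = (fun y => g y 2 3) := funext fun y => hsym y 3 2
  simp only [Fin.sum_univ_four, hG10, hG20, hG30, hG21, hG31, hG32,
    hD10, hD20, hD30, hD21, hD31, hD32]
  ring
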